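/- arXiv:1205.0780 — 5 statements merged into one kernel-verified Lean document; each statement's English description precedes it below -/
import Mathlib

section
/- For every continuously differentiable function χ : [0,1] → ℝ, one has ∫₀¹ (χ(x)² − ∫₀¹ χ(y)² dy)² dx ≤ 4 · (∫₀¹ χ(y)² dy) · (∫₀¹ χ'(y)² dy). -/
/-!
By the fundamental theorem of calculus for `χ²`, any two values of `χ²` on `[0,1]` differ by at
most `∫₀¹ |2 χ χ'|`, so `χ(x)²` lies within `2 ∫₀¹ |χ| |χ'|` of its mean. By Cauchy–Schwarz the
square of this bound is at most `4 (∫₀¹ χ²) (∫₀¹ χ'²)`, and integrating over the unit interval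
gives the claim.
-/

open MeasureTheory Set intervalIntegral

open scoped Interval

theorem DifferentiableOn.hasDerivAt_derivWithin_Icc {f : ℝ → ℝ} {a b t : ℝ}
    (hf : DifferentiableOn ℝ f (Icc a b)) (ht : t ∈ Ioo a b) :
    HasDerivAt f (derivWithin f (Icc a b) t) t :=
  (hf t (Ioo_subset_Icc_self ht)).hasDerivWithinAt.hasDerivAt (Icc_mem_nhds ht.1 ht.2)

theorem abs_sub_le_integral_abs_deriv {g g' : ℝ → ℝ} {a b x y : ℝ}
    (hg : ContinuousOn g (Icc a b)) (hg' : ∀ t ∈ Ioo a b, HasDerivAt g (g' t) t)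
    (hint : IntervalIntegrable g' volume a b) (hx : x ∈ Icc a b) (hy : y ∈ Icc a b) :
    |g x - g y| ≤ ∫ t in a..b, |g' t| := by
  wlog hyx : y ≤ x generalizing x y
  · rw [abs_sub_comm]
    exact this hy hx (le_of_not_ge hyx)
  have hsub : Icc y x ⊆ Icc a b := Icc_subset_Icc hy.1 hx.2
  have ftc : ∫ t in y..x, g' t = g x - g y :=
    integral_eq_sub_of_hasDerivAt_of_le hyx (hg.mono hsub)
      (fun t ht => hg' t (Ioo_subset_Ioo hy.1 hx.2 ht))
      (hint.mono_set (by simpa [uIcc_of_le hyx, uIcc_of_le (hy.1.trans hy.2)] using hsub))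
  calc |g x - g y| = |∫ t in y..x, g' t| := by rw [ftc]
    _ ≤ ∫ t in y..x, |g' t| := abs_integral_le_integral_abs hyx
    _ ≤ ∫ t in a..b, |g' t| :=
      integral_mono_interval hy.1 hyx hx.2 (.of_forall fun _ => abs_nonneg _) hint.abs

theorem abs_mul_sub_integral_le {g : ℝ → ℝ} {a b c M : ℝ}
    (hg : IntervalIntegrable g volume a b) (h : ∀ y ∈ Ι a b, |c - g y| ≤ M) :
    |(b - a) * c - ∫ y in a..b, g y| ≤ M * |b - a| := by
  have hmean : (b - a) * c - ∫ y in a..b, g y = ∫ y in a..b, (c - g y) := by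
    rw [integral_sub intervalIntegrable_const hg, intervalIntegral.integral_const, smul_eq_mul]
  simpa only [hmean, Real.norm_eq_abs] using norm_integral_le_of_norm_le_const (a := a) (b := b)
    (f := fun y => c - g y) (by simpa only [Real.norm_eq_abs] using h)

theorem sq_integral_mul_le_integral_sq_mul_integral_sq {f g : ℝ → ℝ} {a b : ℝ} (hab : a ≤ b)
    (hf : IntervalIntegrable (fun t => f t ^ 2) volume a b)
    (hg : IntervalIntegrable (fun t => g t ^ 2) volume a b)
    (hfg : IntervalIntegrable (fun t => f t * g t) volume a b) :
    (∫ t in a..b, f t * g t) ^ 2 ≤ (∫ t in a..b, f t ^ 2) * ∫ t in a..b, g t ^ 2 := by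
  set A := ∫ t in a..b, f t ^ 2
  set B := ∫ t in a..b, g t ^ 2
  set P := ∫ t in a..b, f t * g t
  have quadratic_nonneg : ∀ r : ℝ, 0 ≤ A * (r * r) + (-2 * P) * r + B := by
    intro r
    have hexpand : ∫ t in a..b, (r * f t - g t) ^ 2 = A * (r * r) + (-2 * P) * r + B := by
      have hpt : (fun t => (r * f t - g t) ^ 2)
          = fun t => r ^ 2 * f t ^ 2 - 2 * r * (f t * g t) + g t ^ 2 := by
        funext t; ring
      rw [hpt, integral_add ((hf.const_mul _).sub (hfg.const_mul _)) hg,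
        integral_sub (hf.const_mul _) (hfg.const_mul _), intervalIntegral.integral_const_mul,
        intervalIntegral.integral_const_mul]
      ring
    rw [← hexpand]
    exact integral_nonneg hab fun t _ => sq_nonneg _
  have hdiscr := discrim_le_zero quadratic_nonneg
  rw [discrim] at hdiscr
  nlinarith

theorem abs_mul_sq_sub_integral_sq_le {χ χ' : ℝ → ℝ} {a b x : ℝ} (hab : a ≤ b)
    (hχ : ContinuousOn χ (Icc a b)) (hχ' : ContinuousOn χ' (Icc a b))
    (hderiv : ∀ t ∈ Ioo a b, HasDerivAt χ (χ' t) t) (hx : x ∈ Icc a b) :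
    |(b - a) * χ x ^ 2 - ∫ y in a..b, χ y ^ 2| ≤ 2 * (∫ t in a..b, |χ t| * |χ' t|) * (b - a) := by
  have hosc : ∀ y ∈ Icc a b, |χ x ^ 2 - χ y ^ 2| ≤ 2 * ∫ t in a..b, |χ t| * |χ' t| := by
    intro y hy
    have := abs_sub_le_integral_abs_deriv (g' := fun t => 2 * χ t * χ' t) (hχ.fun_pow 2)
      (fun t ht => by simpa [mul_comm] using (hderiv t ht).fun_pow 2)
      (((continuousOn_const.mul hχ).mul hχ').intervalIntegrable_of_Icc hab) hx hy
    simpa only [abs_mul, abs_two, mul_assoc, intervalIntegral.integral_const_mul] using this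
  simpa only [abs_of_nonneg (sub_nonneg.2 hab)] using
    abs_mul_sub_integral_le ((hχ.fun_pow 2).intervalIntegrable_of_Icc hab)
      fun y hy => hosc y (Ioc_subset_Icc_self (by simpa [uIoc_of_le hab] using hy))

/-- For a `C¹` function `χ` on `[0,1]`, the `L²` deviation of `χ²` from its mean is bounded by
`4 · (∫₀¹ χ²) · (∫₀¹ (χ')²)`. -/
theorem l2_deviation_of_square_le (χ : ℝ → ℝ) (hχ : ContDiffOn ℝ 1 χ (Set.Icc 0 1)) :
    (∫ x in (0:ℝ)..1, ((χ x) ^ 2 - ∫ y in (0:ℝ)..1, (χ y) ^ 2) ^ 2) ≤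
      4 * (∫ y in (0:ℝ)..1, (χ y) ^ 2) * (∫ y in (0:ℝ)..1, (deriv χ y) ^ 2) := by
  set d := derivWithin χ (Icc 0 1)
  set A := ∫ y in (0:ℝ)..1, χ y ^ 2
  set B := ∫ y in (0:ℝ)..1, d y ^ 2
  have hχc : ContinuousOn χ (Icc 0 1) := hχ.continuousOn
  have hdc : ContinuousOn d (Icc 0 1) :=
    hχ.continuousOn_derivWithin (uniqueDiffOn_Icc zero_lt_one) le_rfl
  have hderiv : ∀ t ∈ Ioo (0:ℝ) 1, HasDerivAt χ (d t) t := fun t ht =>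
    (hχ.differentiableOn one_ne_zero).hasDerivAt_derivWithin_Icc ht
  have hB : ∫ y in (0:ℝ)..1, deriv χ y ^ 2 = B :=
    integral_congr_Ioo_of_le zero_le_one fun t ht => by simp only [(hderiv t ht).deriv]
  have hcs : (∫ t in (0:ℝ)..1, |χ t| * |d t|) ^ 2 ≤ A * B := by
    simpa only [sq_abs] using sq_integral_mul_le_integral_sq_mul_integral_sq zero_le_one
      ((hχc.abs.fun_pow 2).intervalIntegrable_of_Icc zero_le_one)
      ((hdc.abs.fun_pow 2).intervalIntegrable_of_Icc zero_le_one)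
      ((hχc.abs.mul hdc.abs).intervalIntegrable_of_Icc zero_le_one)
  have hdev : ∀ x ∈ Ι (0:ℝ) 1, (χ x ^ 2 - A) ^ 2 ≤ 4 * A * B := by
    intro x hx
    have := abs_mul_sq_sub_integral_sq_le zero_le_one hχc hdc hderiv
      (Ioc_subset_Icc_self (by simpa using hx))
    simp only [sub_zero, one_mul, mul_one] at this
    nlinarith [sq_abs (χ x ^ 2 - A), abs_nonneg (χ x ^ 2 - A)]
  rw [hB]
  calc _ ≤ |∫ x in (0:ℝ)..1, (χ x ^ 2 - A) ^ 2| := le_abs_self _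
    _ ≤ 4 * A * B * |1 - 0| := norm_integral_le_of_norm_le_const fun x hx =>
        (Real.norm_of_nonneg (sq_nonneg _)).trans_le (hdev x hx)
    _ = 4 * A * B := by norm_num
end

section
/- Let μ > 0, λ ∈ [0,1], and let f : ℝ × [0,1] → ℝ be smooth and time-periodic. If u : ℝ × [0,1] → ℝ is smooth, time-periodic, satisfies u(t,0) = u(t,1) = 0 for all t, and solves ∂_t u + λ u ∂_x u − μ ∂²_x u = f on ℝ × [0,1], then ∫_Q (∂_x u)² ≤ (1/(π μ²)) ∫_Q f². -/
/-!
Multiplying the equation by `u` and integrating over `Q`, the time term `∫ u ∂ₜu = ½ ∫ ∂ₜ(u²)`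
vanishes by periodicity, the convection term `λ ∫ u² ∂ₓu = (λ/3) ∫ ∂ₓ(u³)` and the boundary term of
`∫ u ∂ₓ²u = -∫ (∂ₓu)²` vanish by the boundary conditions, leaving `μ ∫ (∂ₓu)² = ∫ f u`.
Young's inequality `f u ≤ f² / (12 μ) + 3 μ u²` and the Poincaré inequality `∫ u² ≤ (1/6) ∫ (∂ₓu)²`
(from `u(x)² ≤ x (1 - x) ∫ (∂ₓu)²`, by Cauchy–Schwarz on `[0, x]` and `[x, 1]`) absorb half of the
left side, so `∫ (∂ₓu)² ≤ ∫ f² / (6 μ²) ≤ ∫ f² / (π μ²)`.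
-/

open MeasureTheory Real Set Function

open scoped Interval

lemma integral_pow_mul_deriv {v v' : ℝ → ℝ} {a b : ℝ} (n : ℕ)
    (hv : ∀ x ∈ [[a, b]], HasDerivAt v (v' x) x) (hv' : ContinuousOn v' [[a, b]]) :
    ∫ x in a..b, v x ^ n * v' x = (v b ^ (n + 1) - v a ^ (n + 1)) / (n + 1) := by
  have hderiv : ∀ x ∈ [[a, b]],
      HasDerivAt (fun y => v y ^ (n + 1) / (n + 1)) (v x ^ n * v' x) x := by
    intro x hx
    refine (((hv x hx).fun_pow (n + 1)).div_const ((n : ℝ) + 1)).congr_deriv ?_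
    rw [Nat.add_sub_cancel]
    push_cast
    field_simp
  have hcont : ContinuousOn v [[a, b]] := fun x hx => (hv x hx).continuousAt.continuousWithinAt
  rw [intervalIntegral.integral_eq_sub_of_hasDerivAt hderiv
    ((hcont.pow n).mul hv').intervalIntegrable]
  ring

lemma sq_intervalIntegral_le {g : ℝ → ℝ} {a b : ℝ} (hab : a ≤ b)
    (hg : IntervalIntegrable g volume a b)
    (hg2 : IntervalIntegrable (fun x => g x ^ 2) volume a b) :
    (∫ x in a..b, g x) ^ 2 ≤ (b - a) * ∫ x in a..b, g x ^ 2 := by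
  set I := ∫ x in a..b, g x
  set J := ∫ x in a..b, g x ^ 2
  -- the quadratic `m ↦ ∫ (g - m)²` is nonnegative, so its discriminant is not positive
  have hquad : ∀ m : ℝ, 0 ≤ (b - a) * (m * m) + (-(2 * I)) * m + J := by
    intro m
    have hexpand : ∫ x in a..b, (g x - m) ^ 2 = (b - a) * (m * m) + (-(2 * I)) * m + J := by
      have hg' : IntervalIntegrable (fun x => 2 * g x * m) volume a b :=
        (hg.const_mul 2).mul_const m
      simp_rw [sub_sq]
      rw [intervalIntegral.integral_add (hg2.sub hg') intervalIntegrable_const,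
        intervalIntegral.integral_sub hg2 hg', intervalIntegral.integral_mul_const,
        intervalIntegral.integral_const_mul, intervalIntegral.integral_const, smul_eq_mul]
      ring
    exact hexpand ▸ intervalIntegral.integral_nonneg hab fun x _ => sq_nonneg _
  have hdisc := discrim_le_zero hquad
  rw [discrim] at hdisc
  linarith

lemma sq_sub_le_mul_integral_deriv_sq {v v' : ℝ → ℝ} {a b : ℝ} (hab : a ≤ b)
    (hv : ∀ x ∈ [[a, b]], HasDerivAt v (v' x) x) (hv' : ContinuousOn v' [[a, b]]) :
    (v b - v a) ^ 2 ≤ (b - a) * ∫ x in a..b, v' x ^ 2 := by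
  rw [← intervalIntegral.integral_eq_sub_of_hasDerivAt hv hv'.intervalIntegrable]
  exact sq_intervalIntegral_le hab hv'.intervalIntegrable (hv'.pow 2).intervalIntegrable

lemma sq_le_mul_integral_deriv_sq {v v' : ℝ → ℝ}
    (hv : ∀ x ∈ Icc (0 : ℝ) 1, HasDerivAt v (v' x) x) (hv' : ContinuousOn v' (Icc 0 1))
    (h0 : v 0 = 0) (h1 : v 1 = 0) {x : ℝ} (hx : x ∈ Icc (0 : ℝ) 1) :
    v x ^ 2 ≤ x * (1 - x) * ∫ y in 0..1, v' y ^ 2 := by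
  have h0x : [[0, x]] ⊆ Icc (0 : ℝ) 1 := uIcc_subset_Icc (left_mem_Icc.2 zero_le_one) hx
  have hx1 : [[x, 1]] ⊆ Icc (0 : ℝ) 1 := uIcc_subset_Icc hx (right_mem_Icc.2 zero_le_one)
  have hleft := sq_sub_le_mul_integral_deriv_sq hx.1 (fun y hy => hv y (h0x hy)) (hv'.mono h0x)
  have hright := sq_sub_le_mul_integral_deriv_sq hx.2 (fun y hy => hv y (hx1 hy)) (hv'.mono hx1)
  rw [h0, sub_zero, sub_zero] at hleft
  rw [h1, zero_sub, neg_sq] at hright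
  rw [← intervalIntegral.integral_add_adjacent_intervals (f := fun y => v' y ^ 2)
    ((hv'.mono h0x).pow 2).intervalIntegrable ((hv'.mono hx1).pow 2).intervalIntegrable]
  nlinarith [mul_le_mul_of_nonneg_left hleft (sub_nonneg.2 hx.2),
    mul_le_mul_of_nonneg_left hright hx.1]

lemma integral_sq_le_integral_deriv_sq_div_six {v v' : ℝ → ℝ}
    (hv : ∀ x ∈ Icc (0 : ℝ) 1, HasDerivAt v (v' x) x) (hv' : ContinuousOn v' (Icc 0 1))
    (h0 : v 0 = 0) (h1 : v 1 = 0) :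
    ∫ x in 0..1, v x ^ 2 ≤ (∫ x in 0..1, v' x ^ 2) / 6 := by
  set D := ∫ x in 0..1, v' x ^ 2
  have hcont : ContinuousOn v (Icc 0 1) := fun x hx => (hv x hx).continuousAt.continuousWithinAt
  have hweight : ∫ x in (0 : ℝ)..1, x * (1 - x) * D = D / 6 := by
    simp_rw [mul_one_sub, ← sq]
    rw [intervalIntegral.integral_mul_const,
      intervalIntegral.integral_sub intervalIntegral.intervalIntegrable_id
        (intervalIntegral.intervalIntegrable_pow 2)]
    norm_num [integral_id, integral_pow]
    ring
  have hweight_int : IntervalIntegrable (fun x : ℝ => x * (1 - x) * D) volume 0 1 :=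
    (by fun_prop : Continuous fun x : ℝ => x * (1 - x) * D).intervalIntegrable 0 1
  rw [← hweight]
  exact intervalIntegral.integral_mono_on zero_le_one
    ((hcont.pow 2).mono (uIcc_of_le zero_le_one).subset).intervalIntegrable hweight_int
    fun x hx => sq_le_mul_integral_deriv_sq hv hv' h0 h1 hx

lemma integral_mul_le_young {g v : ℝ → ℝ} {a b ε : ℝ} (hab : a ≤ b) (hε : 0 < ε)
    (hg : ContinuousOn g [[a, b]]) (hv : ContinuousOn v [[a, b]]) :
    ∫ x in a..b, g x * v x ≤ (∫ x in a..b, g x ^ 2) / (4 * ε) + ε * ∫ x in a..b, v x ^ 2 := by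
  rw [← intervalIntegral.integral_div, ← intervalIntegral.integral_const_mul,
    ← intervalIntegral.integral_add (f := fun x => g x ^ 2 / (4 * ε)) (g := fun x => ε * v x ^ 2)
      ((hg.pow 2).div_const _).intervalIntegrable
      ((hv.pow 2).const_smul ε).intervalIntegrable]
  refine intervalIntegral.integral_mono_on hab (hg.mul hv).intervalIntegrable
    (((hg.pow 2).div_const _).add ((hv.pow 2).const_smul ε)).intervalIntegrable fun x _ => ?_
  rw [div_add' _ _ _ (by positivity), le_div_iff₀ (by positivity)]
  nlinarith [sq_nonneg (g x - 2 * ε * v x)]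

lemma burgers_energy_identity {μ lam a b : ℝ} {v v' v'' w g : ℝ → ℝ}
    (hv : ∀ x ∈ [[a, b]], HasDerivAt v (v' x) x) (hv' : ∀ x ∈ [[a, b]], HasDerivAt v' (v'' x) x)
    (hv'' : ContinuousOn v'' [[a, b]]) (hw : ContinuousOn w [[a, b]]) (ha : v a = 0) (hb : v b = 0)
    (hpde : ∀ x ∈ [[a, b]], w x + lam * v x * v' x - μ * v'' x = g x) :
    (∫ x in a..b, v x * w x) + μ * ∫ x in a..b, v' x ^ 2 = ∫ x in a..b, g x * v x := by
  have hcv : ContinuousOn v [[a, b]] := fun x hx => (hv x hx).continuousAt.continuousWithinAt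
  have hcv' : ContinuousOn v' [[a, b]] := fun x hx => (hv' x hx).continuousAt.continuousWithinAt
  have hconvection : ∫ x in a..b, v x ^ 2 * v' x = 0 := by
    simp [integral_pow_mul_deriv 2 hv hcv', ha, hb]
  have hdiffusion : ∫ x in a..b, v x * v'' x = -∫ x in a..b, v' x ^ 2 := by
    simp [intervalIntegral.integral_mul_deriv_eq_deriv_mul hv hv' hcv'.intervalIntegrable
      hv''.intervalIntegrable, ha, hb, sq]
  have hmul : ∫ x in a..b, g x * v x
      = ∫ x in a..b, (v x * w x + lam * (v x ^ 2 * v' x) - μ * (v x * v'' x)) :=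
    intervalIntegral.integral_congr fun x hx => by rw [← hpde x hx]; ring
  have hw_int : IntervalIntegrable (fun x => v x * w x) volume a b :=
    (hcv.mul hw).intervalIntegrable
  have hconv_int : IntervalIntegrable (fun x => lam * (v x ^ 2 * v' x)) volume a b :=
    (((hcv.pow 2).mul hcv').const_smul lam).intervalIntegrable
  have hdiff_int : IntervalIntegrable (fun x => μ * (v x * v'' x)) volume a b :=
    ((hcv.mul hv'').const_smul μ).intervalIntegrable
  rw [hmul, intervalIntegral.integral_sub (hw_int.add hconv_int) hdiff_int,
    intervalIntegral.integral_add hw_int hconv_int, intervalIntegral.integral_const_mul,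
    intervalIntegral.integral_const_mul, hconvection, hdiffusion]
  ring

lemma integral_integral_mul_deriv_left_eq_zero {U Ut : ℝ → ℝ → ℝ} {a b c d : ℝ}
    (hU : Continuous (uncurry U)) (hUt : Continuous (uncurry Ut))
    (hderiv : ∀ t x, HasDerivAt (fun s => U s x) (Ut t x) t) (hper : ∀ x, U b x = U a x) :
    ∫ t in a..b, ∫ x in c..d, U t x * Ut t x = 0 := by
  have hinner : ∀ x, ∫ t in a..b, U t x * Ut t x = 0 := fun x => by
    simpa [hper x] using integral_pow_mul_deriv (a := a) (b := b) 1 (fun t _ => hderiv t x)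
      (hUt.uncurry_right x).continuousOn
  have hprod : Continuous (uncurry fun t x => U t x * Ut t x) := hU.mul hUt
  rw [intervalIntegral_intervalIntegral_swap
    ((hprod.continuousOn.integrableOn_compact (isCompact_uIcc.prod isCompact_uIcc)).mono_set
      (prod_mono uIoc_subset_uIcc uIoc_subset_uIcc))]
  simp [hinner]

section PartialDerivatives

variable {U : ℝ → ℝ → ℝ}

lemma hasDerivAt_uncurry_right (hU : Differentiable ℝ (uncurry U)) (t x : ℝ) :
    HasDerivAt (U t) (fderiv ℝ (uncurry U) (t, x) (0, 1)) x :=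
  (hU (t, x)).hasFDerivAt.comp_hasDerivAt x ((hasDerivAt_const x t).prodMk (hasDerivAt_id' x))

lemma hasDerivAt_uncurry_left (hU : Differentiable ℝ (uncurry U)) (t x : ℝ) :
    HasDerivAt (fun s => U s x) (fderiv ℝ (uncurry U) (t, x) (1, 0)) t :=
  (hU (t, x)).hasFDerivAt.comp_hasDerivAt (f := fun s => (s, x)) t
    ((hasDerivAt_id' t).prodMk (hasDerivAt_const t x))

lemma hasDerivAt_deriv_right (hU : Differentiable ℝ (uncurry U)) (t x : ℝ) :
    HasDerivAt (U t) (deriv (U t) x) x :=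
  (hasDerivAt_uncurry_right hU t x).differentiableAt.hasDerivAt

lemma hasDerivAt_deriv_left (hU : Differentiable ℝ (uncurry U)) (t x : ℝ) :
    HasDerivAt (fun s => U s x) (deriv (fun s => U s x) t) t :=
  (hasDerivAt_uncurry_left hU t x).differentiableAt.hasDerivAt

lemma ContDiff.uncurry_deriv_right (hU : ContDiff ℝ (⊤ : ℕ∞) (uncurry U)) :
    ContDiff ℝ (⊤ : ℕ∞) (uncurry fun t x => deriv (U t) x) := by
  have h : (uncurry fun t x => deriv (U t) x) = fun p => fderiv ℝ (uncurry U) p (0, 1) := by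
    funext ⟨t, x⟩
    exact (hasDerivAt_uncurry_right (hU.differentiable (by simp)) t x).deriv
  rw [h]
  exact (hU.fderiv_right (by exact_mod_cast le_top)).clm_apply contDiff_const

lemma ContDiff.uncurry_deriv_left (hU : ContDiff ℝ (⊤ : ℕ∞) (uncurry U)) :
    ContDiff ℝ (⊤ : ℕ∞) (uncurry fun t x => deriv (fun s => U s x) t) := by
  have h : (uncurry fun t x => deriv (fun s => U s x) t)
      = fun p => fderiv ℝ (uncurry U) p (1, 0) := by
    funext ⟨t, x⟩
    exact (hasDerivAt_uncurry_left (hU.differentiable (by simp)) t x).deriv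
  rw [h]
  exact (hU.fderiv_right (by exact_mod_cast le_top)).clm_apply contDiff_const

end PartialDerivatives

lemma burgers_slice_energy_bound {μ lam : ℝ} (hμ : 0 < μ) {v v' v'' w g : ℝ → ℝ}
    (hv : ∀ x ∈ Icc (0 : ℝ) 1, HasDerivAt v (v' x) x)
    (hv' : ∀ x ∈ Icc (0 : ℝ) 1, HasDerivAt v' (v'' x) x)
    (hv'' : ContinuousOn v'' (Icc 0 1)) (hw : ContinuousOn w (Icc 0 1))
    (hg : ContinuousOn g (Icc 0 1)) (h0 : v 0 = 0) (h1 : v 1 = 0)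
    (hpde : ∀ x ∈ Icc (0 : ℝ) 1, w x + lam * v x * v' x - μ * v'' x = g x) :
    (∫ x in 0..1, v x * w x) + μ / 2 * ∫ x in 0..1, v' x ^ 2
      ≤ (∫ x in 0..1, g x ^ 2) / (12 * μ) := by
  have h01 : [[(0 : ℝ), 1]] = Icc 0 1 := uIcc_of_le zero_le_one
  have hcv : ContinuousOn v (Icc 0 1) := fun x hx => (hv x hx).continuousAt.continuousWithinAt
  have hcv' : ContinuousOn v' (Icc 0 1) := fun x hx => (hv' x hx).continuousAt.continuousWithinAt
  have henergy := burgers_energy_identity (h01 ▸ hv) (h01 ▸ hv') (h01 ▸ hv'') (h01 ▸ hw) h0 h1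
    (h01 ▸ hpde)
  have hyoung := integral_mul_le_young zero_le_one (by positivity : 0 < 3 * μ) (h01 ▸ hg)
    (h01 ▸ hcv)
  have hpoincare := integral_sq_le_integral_deriv_sq_div_six hv hcv' h0 h1
  rw [show 4 * (3 * μ) = 12 * μ by ring] at hyoung
  nlinarith

open intervalIntegral in
lemma burgers_time_averaged_dissipation_le {μ lam : ℝ} (hμ : 0 < μ) {f u : ℝ → ℝ → ℝ}
    (hf : Continuous (uncurry f)) (hu : ContDiff ℝ (⊤ : ℕ∞) (uncurry u))
    (hper : ∀ x, u 1 x = u 0 x) (hbc : ∀ t, u t 0 = 0 ∧ u t 1 = 0)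
    (hpde : ∀ t, ∀ x ∈ Icc (0 : ℝ) 1,
      deriv (fun s => u s x) t + lam * u t x * deriv (u t) x - μ * deriv (deriv (u t)) x = f t x) :
    μ / 2 * ∫ t in 0..1, ∫ x in 0..1, deriv (u t) x ^ 2
      ≤ (∫ t in 0..1, ∫ x in 0..1, f t x ^ 2) / (12 * μ) := by
  have hdu : Differentiable ℝ (uncurry u) := hu.differentiable (by simp)
  have hux := hu.uncurry_deriv_right
  have hut := hu.uncurry_deriv_left
  have hslice : ∀ t, (∫ x in 0..1, u t x * deriv (fun s => u s x) t)
      + μ / 2 * ∫ x in 0..1, deriv (u t) x ^ 2 ≤ (∫ x in 0..1, f t x ^ 2) / (12 * μ) := fun t =>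
    burgers_slice_energy_bound hμ (fun x _ => hasDerivAt_deriv_right hdu t x)
      (fun x _ => hasDerivAt_deriv_right (hux.differentiable (by simp)) t x)
      (hux.uncurry_deriv_right.continuous.uncurry_left t).continuousOn
      (hut.continuous.uncurry_left t).continuousOn (hf.uncurry_left t).continuousOn
      (hbc t).1 (hbc t).2 (hpde t)
  have htime : ∫ t in 0..1, ∫ x in 0..1, u t x * deriv (fun s => u s x) t = 0 :=
    integral_integral_mul_deriv_left_eq_zero hu.continuous hut.continuous
      (hasDerivAt_deriv_left hdu) hper
  have hparam : ∀ G : ℝ → ℝ → ℝ, Continuous (uncurry G) →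
      IntervalIntegrable (fun t => ∫ x in 0..1, G t x) volume 0 1 := fun _ hG =>
    (continuous_parametric_intervalIntegral_of_continuous' hG 0 1).intervalIntegrable 0 1
  have hA := hparam (fun t x => u t x * deriv (fun s => u s x) t) (hu.continuous.mul hut.continuous)
  have hD := hparam (fun t x => deriv (u t) x ^ 2) (by exact hux.continuous.pow 2)
  have hP := hparam (fun t x => f t x ^ 2) (by exact hf.pow 2)
  have hintegrated := intervalIntegral.integral_mono_on zero_le_one (hA.add (hD.const_mul _))
    (hP.div_const _) fun t _ => hslice t
  rwa [intervalIntegral.integral_add hA (hD.const_mul _), intervalIntegral.integral_const_mul,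
    htime, zero_add, intervalIntegral.integral_div] at hintegrated

theorem burgers_gradient_apriori_bound_general (μ lam : ℝ) (hμ : 0 < μ)
    (f : ℝ → ℝ → ℝ) (hf : ContDiff ℝ (⊤ : ℕ∞) (Function.uncurry f))
    (u : ℝ → ℝ → ℝ) (hu : ContDiff ℝ (⊤ : ℕ∞) (Function.uncurry u))
    (huper : ∀ t x : ℝ, u (t + 1) x = u t x)
    (hbc : ∀ t : ℝ, u t 0 = 0 ∧ u t 1 = 0)
    (hpde : ∀ t : ℝ, ∀ x ∈ Set.Icc (0:ℝ) 1,
      deriv (fun s => u s x) t + lam * u t x * deriv (u t) x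
        - μ * deriv (deriv (u t)) x = f t x) :
    (∫ t in (0:ℝ)..1, ∫ x in (0:ℝ)..1, (deriv (u t) x) ^ 2) ≤
      (1 / (π * μ ^ 2)) * ∫ t in (0:ℝ)..1, ∫ x in (0:ℝ)..1, (f t x) ^ 2 := by
  have hdissipation := burgers_time_averaged_dissipation_le hμ hf.continuous hu
    (fun x => by simpa using huper 0 x) hbc hpde
  have hF : 0 ≤ ∫ t in (0:ℝ)..1, ∫ x in (0:ℝ)..1, (f t x) ^ 2 :=
    intervalIntegral.integral_nonneg zero_le_one fun t _ =>
      intervalIntegral.integral_nonneg zero_le_one fun x _ => sq_nonneg _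
  rw [le_div_iff₀ (by positivity)] at hdissipation
  calc (∫ t in (0:ℝ)..1, ∫ x in (0:ℝ)..1, (deriv (u t) x) ^ 2)
      ≤ 1 / (6 * μ ^ 2) * ∫ t in (0:ℝ)..1, ∫ x in (0:ℝ)..1, (f t x) ^ 2 := by
        rw [div_mul_eq_mul_div, one_mul, le_div_iff₀ (by positivity)]
        linarith
    _ ≤ 1 / (π * μ ^ 2) * ∫ t in (0:ℝ)..1, ∫ x in (0:ℝ)..1, (f t x) ^ 2 := by
        gcongr
        linarith [pi_le_four]

/-- Gradient a priori bound, uniform in the homotopy parameter `λ ∈ [0,1]`, for time-periodic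
solutions of `u_t + λ u u_x − μ u_xx = f` on `ℝ × [0,1]` with homogeneous Dirichlet boundary
conditions: `∫_Q (∂ₓ u)² ≤ (1/(π μ²)) ∫_Q f²`. -/
theorem burgers_gradient_apriori_bound (μ lam : ℝ) (hμ : 0 < μ) (hlam : lam ∈ Set.Icc (0:ℝ) 1)
    (f : ℝ → ℝ → ℝ) (hf : ContDiff ℝ (⊤ : ℕ∞) (Function.uncurry f))
    (hfper : ∀ t x : ℝ, f (t + 1) x = f t x)
    (u : ℝ → ℝ → ℝ) (hu : ContDiff ℝ (⊤ : ℕ∞) (Function.uncurry u))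
    (huper : ∀ t x : ℝ, u (t + 1) x = u t x)
    (hbc : ∀ t : ℝ, u t 0 = 0 ∧ u t 1 = 0)
    (hpde : ∀ t : ℝ, ∀ x ∈ Set.Icc (0:ℝ) 1,
      deriv (fun s => u s x) t + lam * u t x * deriv (u t) x
        - μ * deriv (deriv (u t)) x = f t x) :
    (∫ t in (0:ℝ)..1, ∫ x in (0:ℝ)..1, (deriv (u t) x) ^ 2) ≤
      (1 / (π * μ ^ 2)) * ∫ t in (0:ℝ)..1, ∫ x in (0:ℝ)..1, (f t x) ^ 2 :=
  burgers_gradient_apriori_bound_general μ lam hμ f hf u hu huper hbc hpde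
end

section
/- Let μ > 0 and let v : [0,1] × [0,1] → ℝ be continuous with v(t,0) = v(t,1) = 0 for all t. Let ψ : [0,1] × [0,1] → ℝ be continuous, with ∂_t ψ, ∂_x ψ and ∂²_x ψ continuous on [0,1] × [0,1], satisfying ∂_x ψ(t,0) = ∂_x ψ(t,1) = 0 for all t ∈ [0,1] and ∂_t ψ − μ ∂²_x ψ + v ∂_x ψ = 0 on [0,1] × [0,1]. If ψ(0,x) ≥ 0 for all x ∈ [0,1], then ψ(1,x) ≥ 0 for all x ∈ [0,1]. -/
open Set Filter Topology

/-!
Perturb `ψ` to `ψ + ε t` and look at its minimum over the square. At a minimum `(t₀, x₀)` with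
`t₀ > 0` we would have `∂ₜψ + ε ≤ 0` (one-sided minimum in time), `∂ₓψ = 0` (interior Fermat, or
the Neumann condition on the boundary) and `∂ₓ²ψ ≥ 0` (a one-sided second-derivative test, valid
also at the boundary since `∂ₓψ` vanishes there), contradicting `∂ₜψ = μ ∂ₓ²ψ - v ∂ₓψ`. So the
minimum sits at `t = 0`, whence `ψ(1, x) + ε ≥ min ψ(0, ·) ≥ 0` for every `ε > 0`.
-/

theorem HasDerivAt.nonpos_of_isMinOn_Icc_right {u : ℝ → ℝ} {u' a b : ℝ} (h : HasDerivAt u u' b)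
    (hab : a < b) (hmin : IsMinOn u (Icc a b) b) : u' ≤ 0 := by
  have hslope : Tendsto (slope u b) (𝓝[<] b) (𝓝 u') :=
    (hasDerivAt_iff_tendsto_slope.mp h).mono_left (nhdsLT_le_nhdsNE b)
  refine le_of_tendsto hslope ?_
  filter_upwards [Ioo_mem_nhdsLT hab] with t ht
  rw [slope_def_field]
  exact div_nonpos_of_nonneg_of_nonpos (sub_nonneg.mpr (hmin (Ioo_subset_Icc_self ht)))
    (sub_nonpos.mpr ht.2.le)

theorem second_deriv_nonneg_of_isMinOn_Ico {f g : ℝ → ℝ} {a b c : ℝ} (hab : a < b)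
    (hf : ∀ x ∈ Ico a b, HasDerivAt f (g x) x) (hg : HasDerivAt g c a) (hga : g a = 0)
    (hmin : IsMinOn f (Ico a b) a) : 0 ≤ c := by
  by_contra! hc
  have hslope : Tendsto (slope g a) (𝓝[>] a) (𝓝 c) :=
    (hasDerivAt_iff_tendsto_slope.mp hg).mono_left (nhdsGT_le_nhdsNE a)
  have hneg : {x | g x < 0} ∩ Ioo a b ∈ 𝓝[>] a := by
    refine inter_mem ?_ (Ioo_mem_nhdsGT hab)
    filter_upwards [hslope.eventually_lt_const hc, self_mem_nhdsWithin] with x hx (hax : a < x)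
    rwa [slope_def_field, hga, sub_zero, div_lt_iff₀ (sub_pos.mpr hax), zero_mul] at hx
  obtain ⟨u, hau : a < u, hu⟩ := mem_nhdsGT_iff_exists_Ioo_subset.mp hneg
  obtain ⟨x, hax, hxu⟩ := exists_between hau
  have hIcc : Icc a x ⊆ Ico a b := fun y hy =>
    hy.1.eq_or_lt.elim (fun h => h ▸ left_mem_Ico.mpr hab)
      fun h => Ioo_subset_Ico_self (hu ⟨h, hy.2.trans_lt hxu⟩).2
  obtain ⟨ξ, hξ, hgξ⟩ := exists_hasDerivAt_eq_slope f g hax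
    (fun y hy => (hf y (hIcc hy)).continuousAt.continuousWithinAt)
    (fun y hy => hf y (hIcc (Ioo_subset_Icc_self hy)))
  have hgξ_neg : g ξ < 0 := (hu ⟨hξ.1, hξ.2.trans hxu⟩).1
  have hfx : f a ≤ f x := hmin (hIcc (right_mem_Icc.mpr hax.le))
  rw [hgξ, div_neg_iff] at hgξ_neg
  rcases hgξ_neg with ⟨_, hxa⟩ | ⟨hfxa, _⟩ <;> linarith

theorem second_deriv_nonneg_of_isMinOn_Ioc {f g : ℝ → ℝ} {a b c : ℝ} (hab : a < b)
    (hf : ∀ x ∈ Ioc a b, HasDerivAt f (g x) x) (hg : HasDerivAt g c b) (hgb : g b = 0)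
    (hmin : IsMinOn f (Ioc a b) b) : 0 ≤ c := by
  have hmem : ∀ x ∈ Ico (-b) (-a), -x ∈ Ioc a b := fun x hx =>
    ⟨lt_neg_of_lt_neg hx.2, neg_le.mpr hx.1⟩
  refine second_deriv_nonneg_of_isMinOn_Ico (f := fun x => f (-x)) (g := fun x => -g (-x))
    (neg_lt_neg hab) (fun x hx => ?_) ?_ (by simpa using hgb) (fun x hx => ?_)
  · simpa [Function.comp_def] using (hf (-x) (hmem x hx)).comp x (hasDerivAt_neg x)
  · have hg' : HasDerivAt g c (-(-b)) := by rwa [neg_neg]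
    simpa [Function.comp_def, Pi.neg_def] using (hg'.comp (-b) (hasDerivAt_neg (-b))).neg
  · simpa using hmin (hmem x hx)

theorem second_deriv_nonneg_of_isMinOn_Icc {f g : ℝ → ℝ} {a b x₀ c : ℝ} (hab : a < b)
    (hx₀ : x₀ ∈ Icc a b) (hf : ∀ x ∈ Icc a b, HasDerivAt f (g x) x) (hg : HasDerivAt g c x₀)
    (hgx₀ : g x₀ = 0) (hmin : IsMinOn f (Icc a b) x₀) : 0 ≤ c := by
  rcases hx₀.2.lt_or_eq with hx₀b | rfl
  · exact second_deriv_nonneg_of_isMinOn_Ico hx₀b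
      (fun x hx => hf x ⟨hx₀.1.trans hx.1, hx.2.le⟩) hg hgx₀
      (hmin.on_subset (Ico_subset_Icc_self.trans (Icc_subset_Icc_left hx₀.1)))
  · exact second_deriv_nonneg_of_isMinOn_Ioc hab (fun x hx => hf x (Ioc_subset_Icc_self hx))
      hg hgx₀ (hmin.on_subset Ioc_subset_Icc_self)

section DriftDiffusion

variable {μ : ℝ} {v ψ ψt ψx ψxx : ℝ → ℝ → ℝ}

theorem time_eq_zero_of_isMinOn_add_mul_fst (hμ : 0 < μ)
    (hdt : ∀ t ∈ Icc (0:ℝ) 1, ∀ x ∈ Icc (0:ℝ) 1, HasDerivAt (fun s => ψ s x) (ψt t x) t)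
    (hdx : ∀ t ∈ Icc (0:ℝ) 1, ∀ x ∈ Icc (0:ℝ) 1, HasDerivAt (fun y => ψ t y) (ψx t x) x)
    (hdxx : ∀ t ∈ Icc (0:ℝ) 1, ∀ x ∈ Icc (0:ℝ) 1, HasDerivAt (fun y => ψx t y) (ψxx t x) x)
    (hneu : ∀ t ∈ Icc (0:ℝ) 1, ψx t 0 = 0 ∧ ψx t 1 = 0)
    (hpde : ∀ t ∈ Icc (0:ℝ) 1, ∀ x ∈ Icc (0:ℝ) 1, ψt t x - μ * ψxx t x + v t x * ψx t x = 0)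
    {ε t₀ x₀ : ℝ} (hε : 0 < ε) (ht₀ : t₀ ∈ Icc (0:ℝ) 1) (hx₀ : x₀ ∈ Icc (0:ℝ) 1)
    (hmin : IsMinOn (fun p : ℝ × ℝ => ψ p.1 p.2 + ε * p.1) (Icc 0 1 ×ˢ Icc 0 1) (t₀, x₀)) :
    t₀ = 0 := by
  by_contra ht₀_ne
  have ht₀_pos : 0 < t₀ := lt_of_le_of_ne ht₀.1 (Ne.symm ht₀_ne)
  have hmin_x : IsMinOn (fun y => ψ t₀ y) (Icc 0 1) x₀ := fun x hx => by
    simpa using hmin (mk_mem_prod ht₀ hx)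
  have hmin_t : IsMinOn (fun s => ψ s x₀ + ε * s) (Icc 0 t₀) t₀ := fun t ht =>
    hmin (mk_mem_prod ⟨ht.1, ht.2.trans ht₀.2⟩ hx₀)
  have hψx_zero : ψx t₀ x₀ = 0 := by
    rcases hx₀.1.eq_or_lt with rfl | hx₀_pos
    · exact (hneu t₀ ht₀).1
    rcases hx₀.2.eq_or_lt with rfl | hx₀_lt
    · exact (hneu t₀ ht₀).2
    exact (hmin_x.isLocalMin (Icc_mem_nhds hx₀_pos hx₀_lt)).hasDerivAt_eq_zero
      (hdx t₀ ht₀ x₀ hx₀)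
  have hψxx_nonneg : 0 ≤ ψxx t₀ x₀ :=
    second_deriv_nonneg_of_isMinOn_Icc zero_lt_one hx₀ (hdx t₀ ht₀) (hdxx t₀ ht₀ x₀ hx₀)
      hψx_zero hmin_x
  have hψt_le : ψt t₀ x₀ + ε ≤ 0 := by
    have hd := (hdt t₀ ht₀ x₀ hx₀).add ((hasDerivAt_id t₀).const_mul ε)
    rw [mul_one] at hd
    exact hd.nonpos_of_isMinOn_Icc_right ht₀_pos hmin_t
  have hpde₀ := hpde t₀ ht₀ x₀ hx₀
  rw [hψx_zero, mul_zero] at hpde₀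
  linarith [mul_nonneg hμ.le hψxx_nonneg]

end DriftDiffusion

theorem drift_diffusion_positivity_general (μ : ℝ) (hμ : 0 < μ)
    (v ψ ψt ψx ψxx : ℝ → ℝ → ℝ)
    (hψ : ContinuousOn (Function.uncurry ψ) (Set.Icc 0 1 ×ˢ Set.Icc 0 1))
    (hdt : ∀ t ∈ Set.Icc (0:ℝ) 1, ∀ x ∈ Set.Icc (0:ℝ) 1,
      HasDerivAt (fun s => ψ s x) (ψt t x) t)
    (hdx : ∀ t ∈ Set.Icc (0:ℝ) 1, ∀ x ∈ Set.Icc (0:ℝ) 1,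
      HasDerivAt (fun y => ψ t y) (ψx t x) x)
    (hdxx : ∀ t ∈ Set.Icc (0:ℝ) 1, ∀ x ∈ Set.Icc (0:ℝ) 1,
      HasDerivAt (fun y => ψx t y) (ψxx t x) x)
    (hneu : ∀ t ∈ Set.Icc (0:ℝ) 1, ψx t 0 = 0 ∧ ψx t 1 = 0)
    (hpde : ∀ t ∈ Set.Icc (0:ℝ) 1, ∀ x ∈ Set.Icc (0:ℝ) 1,
      ψt t x - μ * ψxx t x + v t x * ψx t x = 0)
    (hpos : ∀ x ∈ Set.Icc (0:ℝ) 1, 0 ≤ ψ 0 x) :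
    ∀ x ∈ Set.Icc (0:ℝ) 1, 0 ≤ ψ 1 x := by
  intro x hx
  refine le_of_forall_pos_le_add fun ε hε => ?_
  have hcont : ContinuousOn (fun p : ℝ × ℝ => ψ p.1 p.2 + ε * p.1) (Icc 0 1 ×ˢ Icc 0 1) :=
    hψ.add (continuous_const.mul continuous_fst).continuousOn
  obtain ⟨⟨t₀, x₀⟩, ⟨ht₀, hx₀⟩, hmin⟩ := (isCompact_Icc.prod isCompact_Icc).exists_isMinOn
    ⟨(0, 0), mk_mem_prod (left_mem_Icc.mpr zero_le_one) (left_mem_Icc.mpr zero_le_one)⟩ hcont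
  obtain rfl : t₀ = 0 :=
    time_eq_zero_of_isMinOn_add_mul_fst hμ hdt hdx hdxx hneu hpde hε ht₀ hx₀ hmin
  have hmin_one : ψ 0 x₀ + ε * 0 ≤ ψ 1 x + ε * 1 :=
    hmin (mk_mem_prod (right_mem_Icc.mpr zero_le_one) hx)
  linarith [hpos x₀ hx₀]

/-- Positivity (maximum principle) for the drift-diffusion evolution
`ψ_t − μ ψ_xx + v ψ_x = 0` on `[0,1] × [0,1]` with homogeneous Neumann boundary conditions:
if `ψ(0,·) ≥ 0` then `ψ(1,·) ≥ 0`.  The functions `ψt`, `ψx`, `ψxx` are the partial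
derivatives `∂_t ψ`, `∂_x ψ`, `∂²_x ψ`, assumed to exist and be continuous on the square. -/
theorem drift_diffusion_positivity (μ : ℝ) (hμ : 0 < μ)
    (v ψ ψt ψx ψxx : ℝ → ℝ → ℝ)
    (hv : ContinuousOn (Function.uncurry v) (Set.Icc 0 1 ×ˢ Set.Icc 0 1))
    (hvbc : ∀ t ∈ Set.Icc (0:ℝ) 1, v t 0 = 0 ∧ v t 1 = 0)
    (hψ : ContinuousOn (Function.uncurry ψ) (Set.Icc 0 1 ×ˢ Set.Icc 0 1))
    (hψt : ContinuousOn (Function.uncurry ψt) (Set.Icc 0 1 ×ˢ Set.Icc 0 1))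
    (hψx : ContinuousOn (Function.uncurry ψx) (Set.Icc 0 1 ×ˢ Set.Icc 0 1))
    (hψxx : ContinuousOn (Function.uncurry ψxx) (Set.Icc 0 1 ×ˢ Set.Icc 0 1))
    (hdt : ∀ t ∈ Set.Icc (0:ℝ) 1, ∀ x ∈ Set.Icc (0:ℝ) 1,
      HasDerivAt (fun s => ψ s x) (ψt t x) t)
    (hdx : ∀ t ∈ Set.Icc (0:ℝ) 1, ∀ x ∈ Set.Icc (0:ℝ) 1,
      HasDerivAt (fun y => ψ t y) (ψx t x) x)
    (hdxx : ∀ t ∈ Set.Icc (0:ℝ) 1, ∀ x ∈ Set.Icc (0:ℝ) 1,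
      HasDerivAt (fun y => ψx t y) (ψxx t x) x)
    (hneu : ∀ t ∈ Set.Icc (0:ℝ) 1, ψx t 0 = 0 ∧ ψx t 1 = 0)
    (hpde : ∀ t ∈ Set.Icc (0:ℝ) 1, ∀ x ∈ Set.Icc (0:ℝ) 1,
      ψt t x - μ * ψxx t x + v t x * ψx t x = 0)
    (hpos : ∀ x ∈ Set.Icc (0:ℝ) 1, 0 ≤ ψ 0 x) :
    ∀ x ∈ Set.Icc (0:ℝ) 1, 0 ≤ ψ 1 x :=
  drift_diffusion_positivity_general μ hμ v ψ ψt ψx ψxx hψ hdt hdx hdxx hneu hpde hpos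
end

section
/- Let μ > 0, K ∈ ℝ, and let v : ℝ × [0,1] → ℝ be continuous, time-periodic, with v(t,0) = v(t,1) = 0 for all t. Suppose φ : ℝ × [0,1] → ℝ is smooth, time-periodic, strictly positive everywhere, satisfies ∂_x φ(t,0) = ∂_x φ(t,1) = 0 for all t, and solves ∂_t φ − μ ∂²_x φ + v ∂_x φ + K φ = 0 on ℝ × [0,1]. Then K = 0. -/
/-
At a maximum point of `φ` over `ℝ × [0,1]` (which exists by time-periodicity and compactness),
`φ_t = 0`, `φ_x = 0` (in the interior by maximality, on the boundary by the Neumann condition)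
and `φ_xx ≤ 0`, so the equation gives `K φ = μ φ_xx ≤ 0`, i.e. `K ≤ 0`. The same argument at a
minimum point, i.e. at a maximum point of the solution `-φ`, gives `K ≥ 0`.
-/

open Set Function

theorem deriv_deriv_nonpos_of_isMaxOn_Icc {g : ℝ → ℝ} {a b x₀ : ℝ} (hg : Differentiable ℝ g)
    (hab : a < b) (hx₀ : x₀ ∈ Icc a b) (hmax : IsMaxOn g (Icc a b) x₀) (hd : deriv g x₀ = 0) :
    deriv (deriv g) x₀ ≤ 0 := by
  by_contra! hpos
  -- near `x₀`, `g'` has the sign of `x - x₀`, so `g` increases strictly away from `x₀`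
  obtain ⟨ε, hε, hsign⟩ :=
    Metric.eventually_nhds_iff.1 (eventually_nhdsWithin_sign_eq_of_deriv_pos hpos hd)
  rcases hx₀.2.lt_or_eq with hlt | rfl
  · set y := min (x₀ + ε / 2) b
    have hy : x₀ < y := lt_min (by linarith) hlt
    have hgy : g x₀ < g y := by
      refine strictMonoOn_of_deriv_pos (convex_Icc x₀ y) hg.continuous.continuousOn
        (fun c hc => ?_) (left_mem_Icc.2 hy.le) (right_mem_Icc.2 hy.le) hy
      rw [interior_Icc] at hc
      have hcy : c < x₀ + ε / 2 := hc.2.trans_le (min_le_left _ _)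
      have := hsign (show dist c x₀ < ε by
        rw [Real.dist_eq, abs_lt]; constructor <;> linarith [hc.1])
      rwa [sign_pos (sub_pos.2 hc.1), sign_eq_one_iff] at this
    exact hgy.not_ge (hmax ⟨hx₀.1.trans hy.le, min_le_right _ _⟩)
  · set y := max (x₀ - ε / 2) a
    have hy : y < x₀ := max_lt (by linarith) hab
    have hgy : g x₀ < g y := by
      refine strictAntiOn_of_deriv_neg (convex_Icc y x₀) hg.continuous.continuousOn
        (fun c hc => ?_) (left_mem_Icc.2 hy.le) (right_mem_Icc.2 hy.le) hy
      rw [interior_Icc] at hc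
      have hcy : x₀ - ε / 2 < c := (le_max_left _ _).trans_lt hc.1
      have := hsign (show dist c x₀ < ε by
        rw [Real.dist_eq, abs_lt]; constructor <;> linarith [hc.2])
      rwa [sign_neg (sub_neg.2 hc.2), sign_eq_neg_one_iff] at this
    exact hgy.not_ge (hmax ⟨le_max_right _ _, hy.le.trans hx₀.2⟩)

theorem deriv_eq_zero_of_isMaxOn_Icc {g : ℝ → ℝ} {a b x₀ : ℝ} (hx₀ : x₀ ∈ Icc a b)
    (hmax : IsMaxOn g (Icc a b) x₀) (ha : deriv g a = 0) (hb : deriv g b = 0) :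
    deriv g x₀ = 0 := by
  rcases hx₀.1.eq_or_lt with rfl | hax
  · exact ha
  rcases hx₀.2.eq_or_lt with rfl | hxb
  · exact hb
  exact (hmax.isLocalMax (Icc_mem_nhds hax hxb)).deriv_eq_zero

theorem exists_forall_le_of_periodic {X : Type*} [TopologicalSpace X] {ψ : ℝ → X → ℝ}
    (hψ : Continuous (uncurry ψ)) {T : ℝ} (hT : 0 < T) (hper : ∀ x, Periodic (ψ · x) T)
    {s : Set X} (hs : IsCompact s) (hne : s.Nonempty) :
    ∃ t₀, ∃ x₀ ∈ s, ∀ t, ∀ x ∈ s, ψ t x ≤ ψ t₀ x₀ := by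
  obtain ⟨⟨t₀, x₀⟩, ⟨-, hx₀⟩, hmax⟩ := (isCompact_Icc.prod hs).exists_isMaxOn
    ((nonempty_Icc.2 hT.le).prod hne) hψ.continuousOn
  refine ⟨t₀, x₀, hx₀, fun t x hx => ?_⟩
  obtain ⟨t', ht', hψt⟩ := (hper x).exists_mem_Ico₀ hT t
  rw [hψt]
  exact hmax (mk_mem_prod (Ico_subset_Icc_self ht') hx)

def SolvesNeumannEigenproblem (μ K : ℝ) (v ψ : ℝ → ℝ → ℝ) : Prop :=
  (∀ t : ℝ, deriv (ψ t) 0 = 0 ∧ deriv (ψ t) 1 = 0) ∧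
    ∀ t : ℝ, ∀ x ∈ Icc (0:ℝ) 1,
      deriv (fun s => ψ s x) t - μ * deriv (deriv (ψ t)) x + v t x * deriv (ψ t) x
        + K * ψ t x = 0

namespace SolvesNeumannEigenproblem

variable {μ K : ℝ} {v ψ : ℝ → ℝ → ℝ}

theorem neg (h : SolvesNeumannEigenproblem μ K v ψ) :
    SolvesNeumannEigenproblem μ K v (fun t x => -ψ t x) := by
  refine ⟨fun t => ?_, fun t x hx => ?_⟩
  · simp only [deriv.fun_neg, (h.1 t).1, (h.1 t).2, neg_zero, and_self]
  · have hderiv : deriv (fun y => -ψ t y) = fun y => -deriv (ψ t) y :=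
      funext fun _ => deriv.fun_neg
    simp only [hderiv, deriv.fun_neg]
    linear_combination -h.2 t x hx

theorem exists_mul_nonpos (h : SolvesNeumannEigenproblem μ K v ψ) (hμ : 0 ≤ μ)
    (hψ : Continuous (uncurry ψ)) (hdiff : ∀ t, Differentiable ℝ (ψ t))
    (hper : ∀ x, Periodic (ψ · x) 1) : ∃ t x, K * ψ t x ≤ 0 := by
  obtain ⟨t₀, x₀, hx₀, hmax⟩ :=
    exists_forall_le_of_periodic hψ one_pos hper isCompact_Icc (nonempty_Icc.2 zero_le_one)
  have hψt : deriv (fun s => ψ s x₀) t₀ = 0 :=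
    IsLocalMax.deriv_eq_zero (Filter.Eventually.of_forall fun t => hmax t x₀ hx₀)
  have hψx : deriv (ψ t₀) x₀ = 0 :=
    deriv_eq_zero_of_isMaxOn_Icc hx₀ (hmax t₀) (h.1 t₀).1 (h.1 t₀).2
  have hψxx : deriv (deriv (ψ t₀)) x₀ ≤ 0 :=
    deriv_deriv_nonpos_of_isMaxOn_Icc (hdiff t₀) zero_lt_one hx₀ (hmax t₀) hψx
  have hpde := h.2 t₀ x₀ hx₀
  rw [hψt, hψx] at hpde
  exact ⟨t₀, x₀, by nlinarith⟩

end SolvesNeumannEigenproblem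

theorem drift_diffusion_eigenvalue_zero_general (μ K : ℝ) (hμ : 0 < μ)
    (v : ℝ → ℝ → ℝ)
    (φ : ℝ → ℝ → ℝ) (hφ : ContDiff ℝ (⊤ : ℕ∞) (Function.uncurry φ))
    (hφper : ∀ t x : ℝ, φ (t + 1) x = φ t x)
    (hφpos : ∀ t x : ℝ, 0 < φ t x)
    (hneu : ∀ t : ℝ, deriv (φ t) 0 = 0 ∧ deriv (φ t) 1 = 0)
    (hpde : ∀ t : ℝ, ∀ x ∈ Set.Icc (0:ℝ) 1,
      deriv (fun s => φ s x) t - μ * deriv (deriv (φ t)) x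
        + v t x * deriv (φ t) x + K * φ t x = 0) :
    K = 0 := by
  have hsol : SolvesNeumannEigenproblem μ K v φ := ⟨hneu, hpde⟩
  have hdiff : ∀ t, Differentiable ℝ (φ t) := fun t =>
    (hφ.comp (contDiff_const.prodMk contDiff_id)).differentiable (by simp)
  obtain ⟨t₀, x₀, hmax⟩ :=
    hsol.exists_mul_nonpos hμ.le hφ.continuous hdiff fun x t => hφper t x
  obtain ⟨t₁, x₁, hmin⟩ := hsol.neg.exists_mul_nonpos hμ.le hφ.continuous.neg
    (fun t => (hdiff t).neg) fun x t => by simp only [hφper t x]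
  nlinarith [hφpos t₀ x₀, hφpos t₁ x₁]

/-- Proposition 6.8: if a strictly positive, smooth, time-periodic function `φ` with homogeneous
Neumann boundary conditions solves the drift-diffusion eigenproblem
`φ_t − μ φ_xx + v φ_x + K φ = 0` on `ℝ × [0,1]` (with `v` continuous, time-periodic and
vanishing at `x = 0,1`), then the eigenvalue `K` is zero. -/
theorem drift_diffusion_eigenvalue_zero (μ K : ℝ) (hμ : 0 < μ)
    (v : ℝ → ℝ → ℝ) (hv : Continuous (Function.uncurry v))
    (hvper : ∀ t x : ℝ, v (t + 1) x = v t x)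
    (hvbc : ∀ t : ℝ, v t 0 = 0 ∧ v t 1 = 0)
    (φ : ℝ → ℝ → ℝ) (hφ : ContDiff ℝ (⊤ : ℕ∞) (Function.uncurry φ))
    (hφper : ∀ t x : ℝ, φ (t + 1) x = φ t x)
    (hφpos : ∀ t x : ℝ, 0 < φ t x)
    (hneu : ∀ t : ℝ, deriv (φ t) 0 = 0 ∧ deriv (φ t) 1 = 0)
    (hpde : ∀ t : ℝ, ∀ x ∈ Set.Icc (0:ℝ) 1,
      deriv (fun s => φ s x) t - μ * deriv (deriv (φ t)) x
        + v t x * deriv (φ t) x + K * φ t x = 0) :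
    K = 0 :=
  drift_diffusion_eigenvalue_zero_general μ K hμ v φ hφ hφper hφpos hneu hpde
end

section
/- Let μ > 0 and let v : ℝ × [0,1] → ℝ be smooth, time-periodic, with v(t,0) = v(t,1) = 0 for all t. Then there exists M ≥ 0 such that every smooth time-periodic W : ℝ × [0,1] → ℝ with ∂_x W(t,0) = ∂_x W(t,1) = 0 for all t that solves ∂_t W − μ ∂²_x W + (1/2)(∂_x W)² + v ∂_x W = 0 on ℝ × [0,1] satisfies max_{(t,x)∈[0,1]²} W(t,x) − min_{(t,x)∈[0,1]²} W(t,x) ≤ M. -/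
/-!
Differentiating the equation in `x` shows that `p = ∂ₓW` solves the forced viscous Burgers
equation `p_t - μ p_xx + (p + v) p_x + v_x p = 0` with `p(t,0) = p(t,1) = 0`. At a maximum of
`e^{-x} p` over `ℝ × [0,1]` (it exists by periodicity) one has `p_t = 0`, `p_x = p` and
`p_xx ≤ p`, so the transport term contributes `p²` and the equation forces
`p ≤ μ + |v| + |v_x|`; the odd reflection `(x, p, v) ↦ (1 - x, -p, -v)` preserves the equation
and gives the lower bound. The resulting bound `|∂ₓW| ≤ B` controls the oscillation of `W` in
`x`. Integrating the equation in `x`, the Neumann condition kills `μ W_xx`, so the mean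
`∫₀¹ W(t,y) dy` has time derivative `-∫₀¹ (W_x² / 2 + v W_x)`, which is bounded by
`B² / 2 + sup |v| · B`; this controls the oscillation in `t`.
-/

open Function Set Filter Topology MeasureTheory
open scoped ContDiff

section Slices

variable {E : Type*} [NormedAddCommGroup E] [NormedSpace ℝ E] {G : ℝ × ℝ → E} {t x : ℝ}

lemma DifferentiableAt.hasDerivAt_slice_fst (hG : DifferentiableAt ℝ G (t, x)) :
    HasDerivAt (fun s => G (s, x)) (fderiv ℝ G (t, x) (1, 0)) t :=
  hG.hasFDerivAt.comp_hasDerivAt t ((hasDerivAt_id t).prodMk (hasDerivAt_const t x))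

lemma DifferentiableAt.hasDerivAt_slice_snd (hG : DifferentiableAt ℝ G (t, x)) :
    HasDerivAt (fun y => G (t, y)) (fderiv ℝ G (t, x) (0, 1)) x :=
  hG.hasFDerivAt.comp_hasDerivAt x ((hasDerivAt_const x t).prodMk (hasDerivAt_id x))

end Slices

section PartialDerivatives

variable {F : ℝ → ℝ → ℝ} {n : WithTop ℕ∞}

lemma ContDiff.slice_fst (hF : ContDiff ℝ n (uncurry F)) (x : ℝ) :
    ContDiff ℝ n (fun s => F s x) :=
  hF.comp (contDiff_id.prodMk contDiff_const)

lemma ContDiff.slice_snd (hF : ContDiff ℝ n (uncurry F)) (t : ℝ) : ContDiff ℝ n (F t) :=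
  hF.comp (contDiff_const.prodMk contDiff_id)

lemma ContDiff.deriv_slice_fst (hF : ContDiff ℝ (n + 1) (uncurry F)) :
    ContDiff ℝ n (uncurry fun t x => deriv (fun s => F s x) t) := by
  have hd : Differentiable ℝ (uncurry F) := hF.differentiable (by simp)
  have : (uncurry fun t x => deriv (fun s => F s x) t) = fun q => fderiv ℝ (uncurry F) q (1, 0) :=
    funext fun q => (hd q).hasDerivAt_slice_fst.deriv
  rw [this]
  exact (hF.fderiv_right le_rfl).clm_apply contDiff_const

lemma ContDiff.deriv_slice_snd (hF : ContDiff ℝ (n + 1) (uncurry F)) :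
    ContDiff ℝ n (uncurry fun t x => deriv (F t) x) := by
  have hd : Differentiable ℝ (uncurry F) := hF.differentiable (by simp)
  have : (uncurry fun t x => deriv (F t) x) = fun q => fderiv ℝ (uncurry F) q (0, 1) :=
    funext fun q => (hd q).hasDerivAt_slice_snd.deriv
  rw [this]
  exact (hF.fderiv_right le_rfl).clm_apply contDiff_const

lemma deriv_slice_comm (hF : ContDiff ℝ 2 (uncurry F)) (t x : ℝ) :
    deriv (fun y => deriv (fun s => F s y) t) x = deriv (fun s => deriv (F s) x) t := by
  set G := uncurry F
  have hd : Differentiable ℝ G := hF.differentiable (by simp)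
  have hd' : Differentiable ℝ (fderiv ℝ G) :=
    (hF.fderiv_right (m := 1) (by norm_num)).differentiable (by simp)
  have hfst : (fun y => deriv (fun s => F s y) t) = fun y => fderiv ℝ G (t, y) (1, 0) :=
    funext fun y => (hd (t, y)).hasDerivAt_slice_fst.deriv
  have hsnd : (fun s => deriv (F s) x) = fun s => fderiv ℝ G (s, x) (0, 1) :=
    funext fun s => (hd (s, x)).hasDerivAt_slice_snd.deriv
  have hx : HasDerivAt (fun y => fderiv ℝ G (t, y) (1, 0))
      (fderiv ℝ (fderiv ℝ G) (t, x) (0, 1) (1, 0)) x :=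
    (ContinuousLinearMap.apply ℝ ℝ ((1 : ℝ), (0 : ℝ))).hasFDerivAt.comp_hasDerivAt x
      (hd' (t, x)).hasDerivAt_slice_snd
  have ht : HasDerivAt (fun s => fderiv ℝ G (s, x) (0, 1))
      (fderiv ℝ (fderiv ℝ G) (t, x) (1, 0) (0, 1)) t :=
    (ContinuousLinearMap.apply ℝ ℝ ((0 : ℝ), (1 : ℝ))).hasFDerivAt.comp_hasDerivAt t
      (hd' (t, x)).hasDerivAt_slice_fst
  rw [hfst, hsnd, hx.deriv, ht.deriv]
  exact hF.contDiffAt.isSymmSndFDerivAt (by simp) _ _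

end PartialDerivatives

lemma IsLocalMax.deriv_deriv_nonpos {f : ℝ → ℝ} {a : ℝ} (h : IsLocalMax f a)
    (hc : ContinuousAt f a) : deriv (deriv f) a ≤ 0 := by
  by_contra! hpos
  have hconst : f =ᶠ[𝓝 a] fun _ => f a :=
    ((isLocalMin_of_deriv_deriv_pos hpos h.deriv_eq_zero hc).and h).mono
      fun _ hx => le_antisymm hx.2 hx.1
  simp [hconst.deriv.deriv_eq] at hpos

lemma IsLocalMax.deriv_eq_and_deriv_deriv_le_of_exp_neg_mul {f : ℝ → ℝ} {a : ℝ}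
    (hf : Differentiable ℝ f) (hf' : DifferentiableAt ℝ (deriv f) a)
    (h : IsLocalMax (fun x => Real.exp (-x) * f x) a) :
    deriv f a = f a ∧ deriv (deriv f) a ≤ f a := by
  have hexp (x : ℝ) : HasDerivAt (fun y => Real.exp (-y)) (-Real.exp (-x)) x := by
    simpa using (hasDerivAt_neg x).exp
  have hr (x : ℝ) : HasDerivAt (fun y => Real.exp (-y) * f y)
      (Real.exp (-x) * (deriv f x - f x)) x :=
    ((hexp x).fun_mul (hf x).hasDerivAt).congr_deriv (by ring)
  have hr' : HasDerivAt (deriv fun y => Real.exp (-y) * f y)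
      (Real.exp (-a) * (deriv (deriv f) a - 2 * deriv f a + f a)) a := by
    rw [funext fun x => (hr x).deriv]
    exact ((hexp a).fun_mul (hf'.hasDerivAt.fun_sub (hf a).hasDerivAt)).congr_deriv (by ring)
  have hfirst : deriv f a = f a := by
    have := (hr a).deriv.symm.trans h.deriv_eq_zero
    simpa [sub_eq_zero, (Real.exp_pos _).ne'] using this
  refine ⟨hfirst, ?_⟩
  have hsecond := hr'.deriv ▸ h.deriv_deriv_nonpos (hr a).continuousAt
  rw [hfirst] at hsecond
  nlinarith [Real.exp_pos (-a)]

lemma exists_abs_le_of_continuous {f : ℝ → ℝ → ℝ} (hf : Continuous (uncurry f))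
    {S T : Set ℝ} (hS : IsCompact S) (hT : IsCompact T) :
    ∃ C, ∀ t ∈ S, ∀ x ∈ T, |f t x| ≤ C := by
  obtain ⟨C, hC⟩ := (hS.prod hT).exists_bound_of_continuousOn hf.continuousOn
  exact ⟨C, fun t ht x hx => hC (t, x) ⟨ht, hx⟩⟩

lemma exists_forall_le_of_periodic_s17 {f : ℝ → ℝ → ℝ} (hf : Continuous (uncurry f)) {c : ℝ}
    (hc : 0 < c) (hper : ∀ t x, f (t + c) x = f t x) {K : Set ℝ} (hK : IsCompact K)
    (hne : K.Nonempty) :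
    ∃ t₀ ∈ Icc 0 c, ∃ x₀ ∈ K, ∀ t, ∀ x ∈ K, f t x ≤ f t₀ x₀ := by
  obtain ⟨⟨t₀, x₀⟩, ⟨ht₀, hx₀⟩, hmax⟩ := (isCompact_Icc.prod hK).exists_isMaxOn
    ((nonempty_Icc.2 hc.le).prod hne) hf.continuousOn
  refine ⟨t₀, ht₀, x₀, hx₀, fun t x hx => ?_⟩
  have hperx : Periodic (fun t => f t x) c := fun t => hper t x
  obtain ⟨s, hs, hts⟩ := hperx.exists_mem_Ico₀ hc t
  exact hts ▸ hmax (a := (s, x)) ⟨Ico_subset_Icc_self hs, hx⟩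

noncomputable section Operators

variable (μ : ℝ) (v : ℝ → ℝ → ℝ)

def hamiltonJacobiOp (W : ℝ → ℝ → ℝ) (t x : ℝ) : ℝ :=
  deriv (fun s => W s x) t - μ * deriv (deriv (W t)) x
    + (1 / 2) * (deriv (W t) x) ^ 2 + v t x * deriv (W t) x

def burgersOp (p : ℝ → ℝ → ℝ) (t x : ℝ) : ℝ :=
  deriv (fun s => p s x) t - μ * deriv (deriv (p t)) x
    + (p t x + v t x) * deriv (p t) x + deriv (v t) x * p t x

end Operators

def oddReflection (f : ℝ → ℝ → ℝ) (t x : ℝ) : ℝ := -f t (1 - x)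

lemma deriv_oddReflection (f : ℝ → ℝ → ℝ) (t : ℝ) :
    deriv (oddReflection f t) = fun x => deriv (f t) (1 - x) := by
  funext x
  change deriv (fun y => -f t (1 - y)) x = _
  rw [deriv.fun_neg, deriv_comp_const_sub, neg_neg]

lemma burgersOp_oddReflection (μ : ℝ) (v p : ℝ → ℝ → ℝ) (t x : ℝ) :
    burgersOp μ (oddReflection v) (oddReflection p) t x = -burgersOp μ v p t (1 - x) := by
  have hxx : deriv (deriv (oddReflection p t)) x = -deriv (deriv (p t)) (1 - x) := by
    rw [deriv_oddReflection, deriv_comp_const_sub]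
  have htt : deriv (fun s => oddReflection p s x) t = -deriv (fun s => p s (1 - x)) t :=
    deriv.fun_neg
  rw [burgersOp, burgersOp, hxx, htt, deriv_oddReflection, deriv_oddReflection]
  simp only [oddReflection]
  ring

lemma hasDerivAt_hamiltonJacobiOp {μ : ℝ} {v W : ℝ → ℝ → ℝ}
    (hW : ContDiff ℝ 3 (uncurry W)) {t x : ℝ} (hv : DifferentiableAt ℝ (v t) x) :
    HasDerivAt (hamiltonJacobiOp μ v W t) (burgersOp μ v (fun t x => deriv (W t) x) t x) x := by
  have hW' : ContDiff ℝ 2 (deriv (W t)) := (contDiff_succ_iff_deriv.1 (hW.slice_snd t)).2.2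
  have hW'' : ContDiff ℝ 1 (deriv (deriv (W t))) := (contDiff_succ_iff_deriv.1 hW').2.2
  have htime : HasDerivAt (fun y => deriv (fun s => W s y) t)
      (deriv (fun s => deriv (W s) x) t) x := by
    rw [← deriv_slice_comm (hW.of_le (by norm_num))]
    exact (((hW.deriv_slice_fst (n := 2)).slice_snd t).differentiable (by simp) x).hasDerivAt
  have hd1 := (hW'.differentiable (by simp) x).hasDerivAt
  have hd2 := (hW''.differentiable (by simp) x).hasDerivAt
  exact (((htime.fun_sub (hd2.const_mul μ)).fun_add ((hd1.fun_pow 2).const_mul (1 / 2))).fun_add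
    (hv.hasDerivAt.fun_mul hd1)).congr_deriv (by simp only [burgersOp]; ring)

section MaximumPrinciple

variable {μ V Vx : ℝ} {v p : ℝ → ℝ → ℝ}

lemma le_of_burgersOp_eq_zero_of_isMax {t₀ x₀ : ℝ} (hμ : 0 ≤ μ)
    (hp : ContDiff ℝ 2 (p t₀)) (hx₀ : x₀ ∈ Ioo (0 : ℝ) 1)
    (hmax : ∀ t, ∀ x ∈ Icc (0 : ℝ) 1,
      Real.exp (-x) * p t x ≤ Real.exp (-x₀) * p t₀ x₀)
    (hpos : 0 < p t₀ x₀) (hpde : burgersOp μ v p t₀ x₀ = 0) :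
    p t₀ x₀ ≤ μ - v t₀ x₀ - deriv (v t₀) x₀ := by
  have hx₀' : x₀ ∈ Icc (0 : ℝ) 1 := Ioo_subset_Icc_self hx₀
  have htime : deriv (fun s => p s x₀) t₀ = 0 := by
    refine IsLocalMax.deriv_eq_zero (IsMaxOn.isLocalMax (s := univ) (fun s _ => ?_) univ_mem)
    exact (mul_le_mul_iff_right₀ (Real.exp_pos _)).1 (hmax s x₀ hx₀')
  have hspace : IsLocalMax (fun x => Real.exp (-x) * p t₀ x) x₀ :=
    IsMaxOn.isLocalMax (fun x hx => hmax t₀ x hx) (Icc_mem_nhds hx₀.1 hx₀.2)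
  obtain ⟨hpx, hpxx⟩ := hspace.deriv_eq_and_deriv_deriv_le_of_exp_neg_mul
    (hp.differentiable (by norm_num))
    ((contDiff_succ_iff_deriv (n := 1).1 hp).2.2.differentiable one_ne_zero x₀)
  have hdiffusion := mul_le_mul_of_nonneg_left hpxx hμ
  rw [burgersOp, htime, hpx] at hpde
  have hfactor : p t₀ x₀ * (p t₀ x₀ + v t₀ x₀ + deriv (v t₀) x₀ - μ) ≤ 0 := by
    nlinarith
  have := (mul_nonpos_iff_pos_imp_nonpos.1 hfactor).1 hpos
  linarith

theorem le_of_burgersOp_eq_zero (hμ : 0 ≤ μ) (hp : ContDiff ℝ 2 (uncurry p))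
    (hper : ∀ t x, p (t + 1) x = p t x) (hp0 : ∀ t, p t 0 = 0) (hp1 : ∀ t, p t 1 = 0)
    (hv : ∀ t ∈ Icc (0 : ℝ) 1, ∀ x ∈ Icc (0 : ℝ) 1, |v t x| ≤ V)
    (hvx : ∀ t ∈ Icc (0 : ℝ) 1, ∀ x ∈ Icc (0 : ℝ) 1, |deriv (v t) x| ≤ Vx)
    (hpde : ∀ t, ∀ x ∈ Ioo (0 : ℝ) 1, burgersOp μ v p t x = 0) :
    ∀ t, ∀ x ∈ Icc (0 : ℝ) 1, p t x ≤ Real.exp 1 * (μ + V + Vx) := by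
  have hI : (0 : ℝ) ∈ Icc (0 : ℝ) 1 := left_mem_Icc.2 zero_le_one
  have hB : 0 ≤ μ + V + Vx := by
    linarith [(abs_nonneg _).trans (hv 0 hI 0 hI), (abs_nonneg _).trans (hvx 0 hI 0 hI)]
  obtain ⟨t₀, ht₀, x₀, hx₀, hmax⟩ :=
    exists_forall_le_of_periodic_s17 (f := fun t x => Real.exp (-x) * p t x)
    ((Real.continuous_exp.comp continuous_snd.neg).mul hp.continuous) one_pos
    (fun t x => by simp only [hper]) isCompact_Icc (nonempty_Icc.2 zero_le_one)
  have hR : Real.exp (-x₀) * p t₀ x₀ ≤ μ + V + Vx := by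
    rcases le_or_gt (Real.exp (-x₀) * p t₀ x₀) 0 with hR | hR
    · linarith
    have hpos : 0 < p t₀ x₀ := pos_of_mul_pos_right hR (Real.exp_pos _).le
    have hx₀' : x₀ ∈ Ioo (0 : ℝ) 1 := by
      refine ⟨hx₀.1.lt_of_ne ?_, hx₀.2.lt_of_ne ?_⟩ <;> rintro rfl <;> simp [hp0, hp1] at hR
    calc Real.exp (-x₀) * p t₀ x₀ ≤ p t₀ x₀ :=
          mul_le_of_le_one_left hpos.le (Real.exp_le_one_iff.2 (by linarith [hx₀'.1]))
      _ ≤ μ - v t₀ x₀ - deriv (v t₀) x₀ :=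
          le_of_burgersOp_eq_zero_of_isMax hμ (hp.slice_snd t₀) hx₀' hmax hpos
            (hpde t₀ x₀ hx₀')
      _ ≤ μ + V + Vx := by
          linarith [neg_le_of_abs_le (hv t₀ ht₀ x₀ hx₀),
            neg_le_of_abs_le (hvx t₀ ht₀ x₀ hx₀)]
  intro t x hx
  calc p t x = Real.exp x * (Real.exp (-x) * p t x) := by
        rw [← mul_assoc, ← Real.exp_add, add_neg_cancel, Real.exp_zero, one_mul]
    _ ≤ Real.exp x * (μ + V + Vx) :=
        mul_le_mul_of_nonneg_left ((hmax t x hx).trans hR) (Real.exp_pos _).le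
    _ ≤ Real.exp 1 * (μ + V + Vx) := mul_le_mul_of_nonneg_right (Real.exp_le_exp.2 hx.2) hB

theorem neg_le_of_burgersOp_eq_zero (hμ : 0 ≤ μ) (hp : ContDiff ℝ 2 (uncurry p))
    (hper : ∀ t x, p (t + 1) x = p t x) (hp0 : ∀ t, p t 0 = 0) (hp1 : ∀ t, p t 1 = 0)
    (hv : ∀ t ∈ Icc (0 : ℝ) 1, ∀ x ∈ Icc (0 : ℝ) 1, |v t x| ≤ V)
    (hvx : ∀ t ∈ Icc (0 : ℝ) 1, ∀ x ∈ Icc (0 : ℝ) 1, |deriv (v t) x| ≤ Vx)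
    (hpde : ∀ t, ∀ x ∈ Ioo (0 : ℝ) 1, burgersOp μ v p t x = 0) :
    ∀ t, ∀ x ∈ Icc (0 : ℝ) 1, -(Real.exp 1 * (μ + V + Vx)) ≤ p t x := by
  have hmem {x : ℝ} (hx : x ∈ Icc (0 : ℝ) 1) : 1 - x ∈ Icc (0 : ℝ) 1 :=
    ⟨by linarith [hx.2], by linarith [hx.1]⟩
  have hupper := le_of_burgersOp_eq_zero (v := oddReflection v) (p := oddReflection p) hμ
    ((hp.comp (contDiff_fst.prodMk (contDiff_const.sub contDiff_snd))).neg)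
    (fun t x => by simp only [oddReflection, hper]) (fun t => by simp [oddReflection, hp1])
    (fun t => by simp [oddReflection, hp0])
    (fun t ht x hx => by simpa [oddReflection] using hv t ht (1 - x) (hmem hx))
    (fun t ht x hx => by simpa [deriv_oddReflection] using hvx t ht (1 - x) (hmem hx))
    (fun t x hx => by
      rw [burgersOp_oddReflection, hpde t (1 - x) ⟨by linarith [hx.2], by linarith [hx.1]⟩,
        neg_zero])
  intro t x hx
  simpa [oddReflection] using neg_le_neg (hupper t (1 - x) (hmem hx))

end MaximumPrinciple

section HamiltonJacobi

variable {μ V Vx : ℝ} {v W : ℝ → ℝ → ℝ}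

theorem abs_deriv_le_of_hamiltonJacobiOp_eq_zero (hμ : 0 ≤ μ)
    (hW : ContDiff ℝ 3 (uncurry W)) (hper : ∀ t x, W (t + 1) x = W t x)
    (hneumann : ∀ t, deriv (W t) 0 = 0 ∧ deriv (W t) 1 = 0)
    (hvd : ∀ t, Differentiable ℝ (v t))
    (hv : ∀ t ∈ Icc (0 : ℝ) 1, ∀ x ∈ Icc (0 : ℝ) 1, |v t x| ≤ V)
    (hvx : ∀ t ∈ Icc (0 : ℝ) 1, ∀ x ∈ Icc (0 : ℝ) 1, |deriv (v t) x| ≤ Vx)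
    (hpde : ∀ t, ∀ x ∈ Icc (0 : ℝ) 1, hamiltonJacobiOp μ v W t x = 0) :
    ∀ t, ∀ x ∈ Icc (0 : ℝ) 1, |deriv (W t) x| ≤ Real.exp 1 * (μ + V + Vx) := by
  have hp : ContDiff ℝ 2 (uncurry fun t x => deriv (W t) x) :=
    hW.deriv_slice_snd (n := 2)
  have hpper (t x : ℝ) : deriv (W (t + 1)) x = deriv (W t) x := by
    rw [funext (hper t)]
  have hburgers (t : ℝ) (x : ℝ) (hx : x ∈ Ioo (0 : ℝ) 1) :
      burgersOp μ v (fun t x => deriv (W t) x) t x = 0 := by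
    have hzero : hamiltonJacobiOp μ v W t =ᶠ[𝓝 x] fun _ => 0 :=
      eventually_of_mem (Ioo_mem_nhds hx.1 hx.2) fun y hy => hpde t y (Ioo_subset_Icc_self hy)
    rw [← (hasDerivAt_hamiltonJacobiOp hW (hvd t x)).deriv, hzero.deriv_eq, deriv_const]
  intro t x hx
  exact abs_le.2
    ⟨neg_le_of_burgersOp_eq_zero hμ hp hpper (fun t => (hneumann t).1) (fun t => (hneumann t).2)
      hv hvx hburgers t x hx,
    le_of_burgersOp_eq_zero hμ hp hpper (fun t => (hneumann t).1) (fun t => (hneumann t).2)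
      hv hvx hburgers t x hx⟩

end HamiltonJacobi

lemma hasDerivAt_intervalIntegral_slice {F : ℝ → ℝ → ℝ} (hF : ContDiff ℝ 1 (uncurry F))
    (a b t : ℝ) :
    HasDerivAt (fun s => ∫ y in a..b, F s y) (∫ y in a..b, deriv (fun s => F s y) t) t := by
  have hF' : Continuous (uncurry fun s y => deriv (fun s => F s y) s) :=
    (hF.deriv_slice_fst (n := 0)).continuous
  obtain ⟨C, hC⟩ := exists_abs_le_of_continuous hF' (isCompact_Icc (a := t - 1) (b := t + 1))
    (isCompact_uIcc (a := a) (b := b))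
  refine (intervalIntegral.hasDerivAt_integral_of_dominated_loc_of_deriv_le
    (F := F) (F' := fun s y => deriv (fun s => F s y) s)
    (bound := fun _ => C) (Metric.ball_mem_nhds t one_pos)
    (Eventually.of_forall fun s => (hF.slice_snd s).continuous.aestronglyMeasurable)
    ((hF.slice_snd t).continuous.intervalIntegrable a b)
    ((hF'.comp (continuous_const.prodMk continuous_id)).aestronglyMeasurable)
    (Eventually.of_forall fun y hy s hs => hC s ?_ y (uIoc_subset_uIcc hy))
    intervalIntegrable_const
    (Eventually.of_forall fun y _ s _ =>
      ((hF.slice_fst y).differentiable one_ne_zero s).hasDerivAt)).2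
  rw [Metric.mem_ball, Real.dist_eq, abs_lt] at hs
  constructor <;> linarith [hs.1, hs.2]

lemma integral_deriv_fst_eq_of_hamiltonJacobiOp_eq_zero {μ t : ℝ} {v W : ℝ → ℝ → ℝ}
    (hW : ContDiff ℝ 2 (W t)) (hv : Continuous (v t))
    (hneumann : deriv (W t) 0 = 0 ∧ deriv (W t) 1 = 0)
    (hpde : ∀ x ∈ Icc (0 : ℝ) 1, hamiltonJacobiOp μ v W t x = 0) :
    ∫ y in (0 : ℝ)..1, deriv (fun s => W s y) t
      = -∫ y in (0 : ℝ)..1, ((1 / 2) * deriv (W t) y ^ 2 + v t y * deriv (W t) y) := by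
  have hW' : ContDiff ℝ 1 (deriv (W t)) := (contDiff_succ_iff_deriv (n := 1).1 hW).2.2
  have hW'c : Continuous (deriv (W t)) := hW'.continuous
  have hW'' : Continuous (deriv (deriv (W t))) := hW'.continuous_deriv le_rfl
  have hcongr : EqOn (fun y => deriv (fun s => W s y) t)
      (fun y => μ * deriv (deriv (W t)) y
        - ((1 / 2) * deriv (W t) y ^ 2 + v t y * deriv (W t) y)) (uIcc 0 1) := by
    intro y hy
    have := hpde y (by rwa [uIcc_of_le zero_le_one] at hy)
    rw [hamiltonJacobiOp] at this
    linarith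
  have hflux : ∫ y in (0 : ℝ)..1, deriv (deriv (W t)) y = 0 := by
    rw [intervalIntegral.integral_deriv_eq_sub (fun y _ => hW'.differentiable one_ne_zero y)
      (hW''.intervalIntegrable 0 1), hneumann.1, hneumann.2, sub_zero]
  rw [intervalIntegral.integral_congr hcongr, intervalIntegral.integral_sub
    ((hW''.intervalIntegrable 0 1).const_mul μ)
    (Continuous.intervalIntegrable (by fun_prop) 0 1),
    intervalIntegral.integral_const_mul, hflux, mul_zero, zero_sub]

section UnitInterval

variable {f : ℝ → ℝ} {C : ℝ}

lemma abs_sub_le_of_abs_deriv_le (hf : ∀ x ∈ Icc (0 : ℝ) 1, DifferentiableAt ℝ f x)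
    (hC : ∀ x ∈ Icc (0 : ℝ) 1, |deriv f x| ≤ C) {a b : ℝ} (ha : a ∈ Icc (0 : ℝ) 1)
    (hb : b ∈ Icc (0 : ℝ) 1) : |f a - f b| ≤ C := by
  have hmvt := (convex_Icc (0 : ℝ) 1).norm_image_sub_le_of_norm_deriv_le hf hC hb ha
  have hab : |a - b| ≤ 1 := abs_le.2 ⟨by linarith [ha.1, hb.2], by linarith [ha.2, hb.1]⟩
  calc |f a - f b| ≤ C * |a - b| := hmvt
    _ ≤ C * 1 := mul_le_mul_of_nonneg_left hab ((abs_nonneg _).trans (hC a ha))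
    _ = C := mul_one C

lemma abs_sub_integral_le_of_abs_deriv_le (hf : ∀ x ∈ Icc (0 : ℝ) 1, DifferentiableAt ℝ f x)
    (hC : ∀ x ∈ Icc (0 : ℝ) 1, |deriv f x| ≤ C) {a : ℝ} (ha : a ∈ Icc (0 : ℝ) 1) :
    |f a - ∫ y in (0 : ℝ)..1, f y| ≤ C := by
  have hint : IntervalIntegrable f volume 0 1 := ContinuousOn.intervalIntegrable fun x hx =>
    (hf x (by rwa [uIcc_of_le zero_le_one] at hx)).continuousAt.continuousWithinAt
  calc |f a - ∫ y in (0 : ℝ)..1, f y| = ‖∫ y in (0 : ℝ)..1, (f a - f y)‖ := by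
        rw [intervalIntegral.integral_sub intervalIntegrable_const hint,
          intervalIntegral.integral_const, sub_zero, one_smul, Real.norm_eq_abs]
    _ ≤ C * |1 - 0| := intervalIntegral.norm_integral_le_of_norm_le_const fun y hy =>
        abs_sub_le_of_abs_deriv_le hf hC ha
          (Ioc_subset_Icc_self (by rwa [uIoc_of_le zero_le_one] at hy))
    _ = C := by norm_num

end UnitInterval

lemma abs_deriv_integral_le_of_hamiltonJacobiOp_eq_zero {μ V B t : ℝ} {v W : ℝ → ℝ → ℝ}
    (hW : ContDiff ℝ 2 (uncurry W)) (hv : Continuous (v t))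
    (hneumann : deriv (W t) 0 = 0 ∧ deriv (W t) 1 = 0)
    (hpde : ∀ x ∈ Icc (0 : ℝ) 1, hamiltonJacobiOp μ v W t x = 0)
    (hWx : ∀ x ∈ Icc (0 : ℝ) 1, |deriv (W t) x| ≤ B)
    (hvV : ∀ x ∈ Icc (0 : ℝ) 1, |v t x| ≤ V) :
    |deriv (fun s => ∫ y in (0 : ℝ)..1, W s y) t| ≤ (1 / 2) * B ^ 2 + V * B := by
  rw [(hasDerivAt_intervalIntegral_slice (hW.of_le one_le_two) 0 1 t).deriv,
    integral_deriv_fst_eq_of_hamiltonJacobiOp_eq_zero (hW.slice_snd t) hv hneumann hpde, abs_neg]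
  calc _ ≤ ((1 / 2) * B ^ 2 + V * B) * |1 - 0| :=
        intervalIntegral.norm_integral_le_of_norm_le_const fun y hy => by
          have hy' : y ∈ Icc (0 : ℝ) 1 :=
            Ioc_subset_Icc_self (by rwa [uIoc_of_le zero_le_one] at hy)
          have hq := hWx y hy'
          have hvy := hvV y hy'
          have hsq : deriv (W t) y ^ 2 ≤ B ^ 2 := by
            rw [← sq_abs]; exact pow_le_pow_left₀ (abs_nonneg _) hq 2
          have hmul : |v t y| * |deriv (W t) y| ≤ V * B :=
            mul_le_mul hvy hq (abs_nonneg _) ((abs_nonneg _).trans hvy)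
          calc ‖(1 / 2) * deriv (W t) y ^ 2 + v t y * deriv (W t) y‖
              ≤ |(1 / 2) * deriv (W t) y ^ 2| + |v t y * deriv (W t) y| := abs_add_le _ _
            _ = (1 / 2) * deriv (W t) y ^ 2 + |v t y| * |deriv (W t) y| := by
                rw [abs_mul (v t y), abs_of_nonneg (by positivity)]
            _ ≤ (1 / 2) * B ^ 2 + V * B := by linarith
    _ = (1 / 2) * B ^ 2 + V * B := by norm_num

theorem hamilton_jacobi_oscillation_bound_general (μ : ℝ) (hμ : 0 < μ)
    (v : ℝ → ℝ → ℝ) (hv : ContDiff ℝ (⊤ : ℕ∞) (Function.uncurry v)) :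
    ∃ M : ℝ, 0 ≤ M ∧ ∀ W : ℝ → ℝ → ℝ,
      ContDiff ℝ (⊤ : ℕ∞) (Function.uncurry W) →
      (∀ t x : ℝ, W (t + 1) x = W t x) →
      (∀ t : ℝ, deriv (W t) 0 = 0 ∧ deriv (W t) 1 = 0) →
      (∀ t : ℝ, ∀ x ∈ Set.Icc (0:ℝ) 1,
        deriv (fun s => W s x) t - μ * deriv (deriv (W t)) x
          + (1 / 2) * (deriv (W t) x) ^ 2 + v t x * deriv (W t) x = 0) →
      ∀ t ∈ Set.Icc (0:ℝ) 1, ∀ x ∈ Set.Icc (0:ℝ) 1,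
        ∀ t' ∈ Set.Icc (0:ℝ) 1, ∀ x' ∈ Set.Icc (0:ℝ) 1,
          W t x - W t' x' ≤ M := by
  have h0 : (0 : ℝ) ∈ Icc (0 : ℝ) 1 := left_mem_Icc.2 zero_le_one
  obtain ⟨V, hV⟩ := exists_abs_le_of_continuous (S := Icc 0 1) (T := Icc 0 1)
    hv.continuous isCompact_Icc isCompact_Icc
  obtain ⟨Vx, hVx⟩ := exists_abs_le_of_continuous (S := Icc 0 1) (T := Icc 0 1)
    (hv.deriv_slice_snd (n := ∞)).continuous isCompact_Icc isCompact_Icc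
  have hV₀ : 0 ≤ V := (abs_nonneg _).trans (hV 0 h0 0 h0)
  have hVx₀ : 0 ≤ Vx := (abs_nonneg _).trans (hVx 0 h0 0 h0)
  set B := Real.exp 1 * (μ + V + Vx)
  refine ⟨2 * B + ((1 / 2) * B ^ 2 + V * B), by positivity, ?_⟩
  intro W hW hper hneumann hpde t ht x hx t' ht' x' hx'
  have hgrad := abs_deriv_le_of_hamiltonJacobiOp_eq_zero hμ.le (hW.of_le (by norm_cast)) hper
    hneumann (fun t => (hv.slice_snd t).differentiable (by simp)) hV hVx hpde
  have hspace (s y : ℝ) (hy : y ∈ Icc (0 : ℝ) 1) :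
      |W s y - ∫ z in (0 : ℝ)..1, W s z| ≤ B :=
    abs_sub_integral_le_of_abs_deriv_le
      (fun z _ => (hW.slice_snd s).differentiable (by simp) z) (hgrad s) hy
  have htime : |(∫ z in (0 : ℝ)..1, W t z) - ∫ z in (0 : ℝ)..1, W t' z|
      ≤ (1 / 2) * B ^ 2 + V * B :=
    abs_sub_le_of_abs_deriv_le (f := fun s => ∫ z in (0 : ℝ)..1, W s z)
      (fun s _ =>
        (hasDerivAt_intervalIntegral_slice (hW.of_le (by norm_cast)) 0 1 s).differentiableAt)
      (fun s hs => abs_deriv_integral_le_of_hamiltonJacobiOp_eq_zero (hW.of_le (by norm_cast))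
        (hv.slice_snd s).continuous (hneumann s) (hpde s) (hgrad s) (hV s hs)) ht ht'
  linarith [(abs_le.1 (hspace t x hx)).2, (abs_le.1 (hspace t' x' hx')).1, (abs_le.1 htime).2]

/-- Lemma 6.9 (classical form): for fixed `μ > 0` and `v` smooth, time-periodic, vanishing at
`x = 0,1`, the set of smooth time-periodic Neumann solutions `W` of the quadratic
Hamilton–Jacobi equation `W_t − μ W_xx + ½ (W_x)² + v W_x = 0` is bounded in `C⁰([0,1]²)`
modulo additive constants: the oscillation `max W − min W` over `[0,1]²` is uniformly
bounded. -/
theorem hamilton_jacobi_oscillation_bound (μ : ℝ) (hμ : 0 < μ)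
    (v : ℝ → ℝ → ℝ) (hv : ContDiff ℝ (⊤ : ℕ∞) (Function.uncurry v))
    (hvper : ∀ t x : ℝ, v (t + 1) x = v t x)
    (hvbc : ∀ t : ℝ, v t 0 = 0 ∧ v t 1 = 0) :
    ∃ M : ℝ, 0 ≤ M ∧ ∀ W : ℝ → ℝ → ℝ,
      ContDiff ℝ (⊤ : ℕ∞) (Function.uncurry W) →
      (∀ t x : ℝ, W (t + 1) x = W t x) →
      (∀ t : ℝ, deriv (W t) 0 = 0 ∧ deriv (W t) 1 = 0) →
      (∀ t : ℝ, ∀ x ∈ Set.Icc (0:ℝ) 1,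
        deriv (fun s => W s x) t - μ * deriv (deriv (W t)) x
          + (1 / 2) * (deriv (W t) x) ^ 2 + v t x * deriv (W t) x = 0) →
      ∀ t ∈ Set.Icc (0:ℝ) 1, ∀ x ∈ Set.Icc (0:ℝ) 1,
        ∀ t' ∈ Set.Icc (0:ℝ) 1, ∀ x' ∈ Set.Icc (0:ℝ) 1,
          W t x - W t' x' ≤ M :=
  hamilton_jacobi_oscillation_bound_general μ hμ v hv
end
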